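/- Let d ≥ 3 and let V ≥ 0 be a function in L¹_loc(ℝ^d). Suppose that for some r₀ > 0 and some function γ with γ(r) ∈ (0, 1) for all r ∈ (0, r₀) and limsup_{r↓0} r^{−2} γ(r) = ∞, the condition lim_{|y|→∞} V⋆(γ(r)·mes_d(Q_r(y)); Q_r(y)) = ∞ holds for every r ∈ (0, r₀]. Then for every r ∈ (0, r₀] one also has lim_{|y|→∞} (Y⋆)⋆(γ(r)·mes_d(Q_r(y)); Q_r(y)) = ∞, where Y(x, s) := √(V(x)) · |x − s|^{2−d} · √(V(s)). -/

import Mathlib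

/-
On a cube `Q` of side `2r` in `ℝ^d` any two points are at distance at most `D = 2r√d`, and
`2 - d ≤ 0`, so `Y(x, s) ≥ D^(2-d) √V(x) √V(s)` for `x ≠ s` in `Q`. Hence if `V ≥ α` on a set
`A ⊆ Q` of measure at least `t`, then for each `s ∈ A` the section `Y(·, s)` is at least
`D^(2-d) α` on `A \ {s}`, a set of the same measure; so the inner rearrangement is at least
`D^(2-d) α` on `A`, and so is the repeated one. Thus
`(Y⋆)⋆(t; Q) ≥ D^(2-d) V⋆(t; Q)` for every cube, and the divergence of the right-hand side
as `|y| → ∞` carries over to the left.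
-/

open MeasureTheory Filter

/-- The nonincreasing rearrangement of a nonnegative function `f` with respect to a
measure `μ`: `f⋆(t; X; μ) := sup {s > 0 : μ {x : f x ≥ s} ≥ t}`, with `sup ∅ = 0`. -/
noncomputable def rearr {X : Type*} [MeasurableSpace X] (μ : Measure X)
    (f : X → ℝ) (t : ℝ) : ℝ :=
  sSup {s : ℝ | 0 < s ∧ ENNReal.ofReal t ≤ μ {x | s ≤ f x}}

/-- The closed cube `Q_r(y) = y + [-r, r]^d` of side `2r` centered at `y`. -/
def cube {d : ℕ} (r : ℝ) (y : EuclideanSpace ℝ (Fin d)) : Set (EuclideanSpace ℝ (Fin d)) :=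
  {x | ∀ i, |x i - y i| ≤ r}

open Set

section Rearrangement

variable {X : Type*} [MeasurableSpace X] {μ : Measure X} {f : X → ℝ} {t : ℝ}

lemma rearr_nonneg (μ : Measure X) (f : X → ℝ) (t : ℝ) : 0 ≤ rearr μ f t :=
  Real.sSup_nonneg fun _ hs => hs.1.le

lemma rearr_of_nonpos (μ : Measure X) (f : X → ℝ) (ht : t ≤ 0) : rearr μ f t = 0 := by
  have : {s : ℝ | 0 < s ∧ ENNReal.ofReal t ≤ μ {x | s ≤ f x}} = Ioi 0 := by
    ext s; simp [ENNReal.ofReal_of_nonpos ht]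
  rw [rearr, this, Real.sSup_of_not_bddAbove (not_bddAbove_Ioi 0)]

lemma bddAbove_rearr_set [IsFiniteMeasure μ] (hf : Measurable f) (ht : 0 < t) :
    BddAbove {s : ℝ | 0 < s ∧ ENNReal.ofReal t ≤ μ {x | s ≤ f x}} := by
  have hanti : Antitone fun n : ℕ => {x | (n : ℝ) ≤ f x} :=
    fun _ _ hmn _ hx => (Nat.mono_cast hmn).trans (α := ℝ) hx
  have hempty : ⋂ n : ℕ, {x | (n : ℝ) ≤ f x} = ∅ :=
    iInter_eq_empty_iff.mpr fun x => (exists_nat_gt (f x)).imp fun _ hn => not_le.mpr hn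
  have htend := tendsto_measure_iInter_atTop (s := fun n : ℕ => {x | (n : ℝ) ≤ f x})
    (fun n => (hf measurableSet_Ici).nullMeasurableSet) hanti ⟨0, measure_ne_top μ _⟩
  rw [hempty, measure_empty] at htend
  obtain ⟨n, hn⟩ := (htend.eventually_lt_const (ENNReal.ofReal_pos.mpr ht)).exists
  refine ⟨n, fun s hs => le_of_not_gt fun hns => ?_⟩
  exact (hs.2.trans (measure_mono fun x hx => hns.le.trans hx)).not_gt hn

lemma le_rearr [IsFiniteMeasure μ] (hf : Measurable f) (ht : 0 < t) {s : ℝ} (hs : 0 < s)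
    (hμ : ENNReal.ofReal t ≤ μ {x | s ≤ f x}) : s ≤ rearr μ f t :=
  le_csSup (bddAbove_rearr_set hf ht) ⟨hs, hμ⟩

lemma le_rearr_iff_forall_rat [IsFiniteMeasure μ] (hf : Measurable f) (ht : 0 < t) {β : ℝ}
    (hβ : 0 < β) :
    β ≤ rearr μ f t ↔
      ∀ q : ℚ, 0 < (q : ℝ) → (q : ℝ) < β → ENNReal.ofReal t ≤ μ {x | (q : ℝ) ≤ f x} := by
  constructor
  · intro h q hq hqβ
    obtain ⟨s, hs, hqs⟩ := exists_lt_of_lt_csSup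
      (nonempty_iff_ne_empty.mpr fun he => by simp [rearr, he] at h; linarith) (hqβ.trans_le h)
    exact hs.2.trans (measure_mono fun x hx => hqs.le.trans hx)
  · intro h
    by_contra! hlt
    obtain ⟨q, hq, hqβ⟩ := exists_rat_btwn (max_lt hlt hβ)
    have hq0 : 0 < (q : ℝ) := (le_max_right _ 0).trans_lt hq
    exact (le_rearr hf ht hq0 (h q hq0 hqβ)).not_gt ((le_max_left _ 0).trans_lt hq)

lemma measurable_rearr_prodMk_right {S : Type*} [MeasurableSpace S] [IsFiniteMeasure μ]
    {F : X × S → ℝ} (hF : Measurable F) (t : ℝ) :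
    Measurable fun s => rearr μ (fun x => F (x, s)) t := by
  rcases le_or_gt t 0 with ht | ht
  · simp_rw [rearr_of_nonpos μ _ ht]
    exact measurable_const
  refine measurable_of_Ici fun β => ?_
  rcases le_or_gt β 0 with hβ | hβ
  · convert MeasurableSet.univ
    exact eq_univ_of_forall fun s => hβ.trans (rearr_nonneg _ _ _)
  have : (fun s => rearr μ (fun x => F (x, s)) t) ⁻¹' Ici β =
      ⋂ (q : ℚ) (_ : 0 < (q : ℝ)) (_ : (q : ℝ) < β),
        {s | ENNReal.ofReal t ≤ μ ((fun x => (x, s)) ⁻¹' {p | (q : ℝ) ≤ F p})} := by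
    ext s
    simp only [mem_preimage, mem_Ici, mem_iInter]
    exact le_rearr_iff_forall_rat (hF.comp measurable_prodMk_right) ht hβ
  rw [this]
  exact .iInter fun q => .iInter fun _ => .iInter fun _ =>
    measurableSet_le measurable_const (measurable_measure_prodMk_right (hF measurableSet_Ici))

lemma mul_rearr_le_rearr [IsFiniteMeasure μ] {h : X → ℝ} (hh : Measurable h) {c : ℝ}
    (hc : 0 < c) (ht : 0 < t)
    (hfh : ∀ α > 0, ENNReal.ofReal t ≤ μ {x | α ≤ f x} →
      ENNReal.ofReal t ≤ μ {x | c * α ≤ h x}) :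
    c * rearr μ f t ≤ rearr μ h t := by
  rw [← le_div_iff₀' hc]
  refine Real.sSup_le (fun α hα => ?_) (div_nonneg (rearr_nonneg _ _ _) hc.le)
  rw [le_div_iff₀' hc]
  exact le_rearr hh ht (mul_pos hc hα.1) (hfh α hα.1 hα.2)

end Rearrangement

lemma mul_le_sqrt_mul_mul_sqrt {a b α c w : ℝ} (hα : 0 ≤ α) (ha : α ≤ a) (hb : α ≤ b)
    (hc : 0 ≤ c) (hcw : c ≤ w) : c * α ≤ √a * w * √b := by
  calc c * α = √α * c * √α := by rw [mul_comm √α, mul_assoc, Real.mul_self_sqrt hα]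
    _ ≤ √a * w * √b := by
      have : 0 ≤ w := hc.trans hcw
      gcongr

section Kernel

variable {E : Type*} [NormedAddCommGroup E] [MeasurableSpace E] [BorelSpace E]
  [SecondCountableTopology E] {μ : Measure E} [NullSingletonClass μ]

theorem rpow_mul_rearr_le_rearr_rearr {V : E → ℝ} (hV : Measurable V) {Q : Set E}
    (hQ : MeasurableSet Q) (hμQ : μ Q ≠ ⊤) {D p : ℝ} (hD : 0 < D) (hp : p ≤ 0)
    (hdiam : ∀ x ∈ Q, ∀ s ∈ Q, ‖x - s‖ ≤ D) (t : ℝ) :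
    D ^ p * rearr (μ.restrict Q) V t ≤
      rearr (μ.restrict Q)
        (fun s => rearr (μ.restrict Q) (fun x => √(V x) * ‖x - s‖ ^ p * √(V s)) t) t := by
  rcases le_or_gt t 0 with ht | ht
  · simp [rearr_of_nonpos _ _ ht]
  have : IsFiniteMeasure (μ.restrict Q) := isFiniteMeasure_restrict.mpr hμQ
  have hY : Measurable fun z : E × E => √(V z.1) * ‖z.1 - z.2‖ ^ p * √(V z.2) := by fun_prop
  have hc : 0 < D ^ p := Real.rpow_pos_of_pos hD p
  refine mul_rearr_le_rearr (measurable_rearr_prodMk_right hY t) hc ht fun α hα hVα => ?_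
  refine hVα.trans (measure_mono_ae ?_)
  filter_upwards [ae_restrict_mem hQ] with s hsQ (hαs : α ≤ V s)
  refine le_rearr (hY.comp measurable_prodMk_right) ht (mul_pos hc hα) (hVα.trans ?_)
  refine measure_mono_ae ?_
  filter_upwards [ae_restrict_mem hQ, ae_restrict_of_ae (μ.ae_ne s)] with x hxQ hxs
    (hαx : α ≤ V x)
  have hpos : 0 < ‖x - s‖ := norm_pos_iff.mpr (sub_ne_zero.mpr hxs)
  exact mul_le_sqrt_mul_mul_sqrt hα.le hαx hαs hc.le
    (Real.rpow_le_rpow_of_nonpos hpos (hdiam x hxQ s hsQ) hp)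

end Kernel

section Cube

variable {d : ℕ}

lemma norm_le_sqrt_mul_of_forall_abs_le (z : EuclideanSpace ℝ (Fin d)) {R : ℝ} (hR : 0 ≤ R)
    (h : ∀ i, |z i| ≤ R) : ‖z‖ ≤ √d * R := by
  have hsum : ∑ i, ‖z i‖ ^ 2 ≤ d * R ^ 2 := by
    calc ∑ i, ‖z i‖ ^ 2 ≤ ∑ _i : Fin d, R ^ 2 :=
          Finset.sum_le_sum fun i _ => pow_le_pow_left₀ (norm_nonneg _) (h i) 2
      _ = d * R ^ 2 := by simp
  rw [EuclideanSpace.norm_eq, ← Real.sqrt_sq hR, ← Real.sqrt_mul (Nat.cast_nonneg d)]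
  exact Real.sqrt_le_sqrt hsum

lemma norm_sub_le_of_mem_cube {r : ℝ} (hr : 0 ≤ r) {y x s : EuclideanSpace ℝ (Fin d)}
    (hx : x ∈ cube r y) (hs : s ∈ cube r y) : ‖x - s‖ ≤ √d * (2 * r) := by
  refine norm_le_sqrt_mul_of_forall_abs_le _ (by positivity) fun i => ?_
  calc |(x - s) i| = |(x i - y i) - (s i - y i)| := by simp
    _ ≤ |x i - y i| + |s i - y i| := abs_sub _ _
    _ ≤ 2 * r := by linarith [hx i, hs i]

lemma measurableSet_cube (r : ℝ) (y : EuclideanSpace ℝ (Fin d)) :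
    MeasurableSet (cube r y) := by
  have : IsClosed (cube r y) := by
    simp only [cube, ofPred_forall]
    exact isClosed_iInter fun i => isClosed_le (by fun_prop) continuous_const
  exact this.measurableSet

lemma volume_cube_ne_top (r : ℝ) (y : EuclideanSpace ℝ (Fin d)) : volume (cube r y) ≠ ⊤ := by
  refine (measure_mono fun x hx => ?_).trans_lt (measure_closedBall_lt_top (x := y)
    (r := √d * max r 0)) |>.ne
  rw [Metric.mem_closedBall, dist_eq_norm]
  exact norm_le_sqrt_mul_of_forall_abs_le _ (le_max_right _ _) fun i =>
    (by simpa using hx i : |(x - y) i| ≤ r).trans (le_max_left _ _)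

end Cube

theorem stmt16_general {d : ℕ} (hd : 3 ≤ d)
    (V : EuclideanSpace ℝ (Fin d) → ℝ) (hVmeas : Measurable V)
    (r₀ : ℝ) (γ : ℝ → ℝ)
    (hmain : ∀ r : ℝ, 0 < r → r ≤ r₀ →
      Tendsto (fun y : EuclideanSpace ℝ (Fin d) =>
          rearr (volume.restrict (cube r y)) V (γ r * (volume (cube r y)).toReal))
        (comap (fun y : EuclideanSpace ℝ (Fin d) => ‖y‖) atTop) atTop) :
    ∀ r : ℝ, 0 < r → r ≤ r₀ →
      Tendsto (fun y : EuclideanSpace ℝ (Fin d) =>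
          rearr (volume.restrict (cube r y))
            (fun s => rearr (volume.restrict (cube r y))
              (fun x => Real.sqrt (V x) * ‖x - s‖ ^ ((2 : ℝ) - d) * Real.sqrt (V s))
              (γ r * (volume (cube r y)).toReal))
            (γ r * (volume (cube r y)).toReal))
        (comap (fun y : EuclideanSpace ℝ (Fin d) => ‖y‖) atTop) atTop := by
  have hd' : (3 : ℝ) ≤ d := by exact_mod_cast hd
  -- makes `volume` atomless
  have : Nonempty (Fin d) := ⟨⟨0, by omega⟩⟩
  intro r hr hrr₀
  have hD : 0 < √d * (2 * r) := by positivity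
  have hkernel (y : EuclideanSpace ℝ (Fin d)) := rpow_mul_rearr_le_rearr_rearr hVmeas
    (measurableSet_cube r y) (volume_cube_ne_top r y) hD (by linarith : (2 : ℝ) - d ≤ 0)
    (fun x hx s hs => norm_sub_le_of_mem_cube hr.le hx hs) (γ r * (volume (cube r y)).toReal)
  exact tendsto_atTop_mono hkernel
    ((tendsto_const_mul_atTop_of_pos (Real.rpow_pos_of_pos hD _)).mpr (hmain r hr hrr₀))

theorem stmt16 {d : ℕ} (hd : 3 ≤ d)
    (V : EuclideanSpace ℝ (Fin d) → ℝ) (hVmeas : Measurable V) (hV0 : ∀ x, 0 ≤ V x)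
    (hVloc : LocallyIntegrable V)
    (r₀ : ℝ) (hr₀ : 0 < r₀) (γ : ℝ → ℝ)
    (hγ : ∀ r ∈ Set.Ioo (0 : ℝ) r₀, γ r ∈ Set.Ioo (0 : ℝ) 1)
    (hγlim : ∀ M : ℝ, ∃ᶠ r in nhdsWithin 0 (Set.Ioi 0), M ≤ γ r / r ^ 2)
    (hmain : ∀ r : ℝ, 0 < r → r ≤ r₀ →
      Tendsto (fun y : EuclideanSpace ℝ (Fin d) =>
          rearr (volume.restrict (cube r y)) V (γ r * (volume (cube r y)).toReal))
        (comap (fun y : EuclideanSpace ℝ (Fin d) => ‖y‖) atTop) atTop) :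
    ∀ r : ℝ, 0 < r → r ≤ r₀ →
      Tendsto (fun y : EuclideanSpace ℝ (Fin d) =>
          rearr (volume.restrict (cube r y))
            (fun s => rearr (volume.restrict (cube r y))
              (fun x => Real.sqrt (V x) * ‖x - s‖ ^ ((2 : ℝ) - d) * Real.sqrt (V s))
              (γ r * (volume (cube r y)).toReal))
            (γ r * (volume (cube r y)).toReal))
        (comap (fun y : EuclideanSpace ℝ (Fin d) => ‖y‖) atTop) atTop :=
  stmt16_general hd V hVmeas r₀ γ hmain
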